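/- For every natural number n > 0, the self-membership of the set of all sets of size n is independent in BST: letting α_n := ∃y∀x(x∈y ↔ card_n(x)) and σ_n := ∀y(∀x(x∈y ↔ card_n(x)) → y∈y), both BST ∪ {α_n, σ_n} and BST ∪ {α_n, ¬σ_n} are satisfiable. -/

import Mathlib

/-!
Both theories have small finite models in which a nonempty set is determined by the one or two
elements it omits. On `Fin (n + 1)`, let `0` be empty and let `y ≠ 0` contain everything except
`y + 1`: the `n`-element sets are exactly the nonzero elements, they make up `Fin.last n` because
`Fin.last n + 1 = 0`, and so `Fin.last n ∈ Fin.last n`. On `Fin (n + 2)`, let `y` contain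
everything except `0` and `y`: the `n`-element sets are again the nonzero elements, they make up
`0`, and `0 ∉ 0`.
-/

open FirstOrder FirstOrder.Language

namespace SetParadox

/-- The language with a single binary relation symbol `∈`. -/
def L : Language := ⟨fun _ => Empty, fun n => match n with | 2 => Unit | _ => Empty⟩

/-- The membership relation symbol. -/
def memRel : L.Relations 2 := Unit.unit

/-- `memF t₁ t₂` is the atomic formula `t₁ ∈ t₂`. -/
def memF {n : ℕ} (t₁ t₂ : L.Term (Empty ⊕ Fin n)) : L.BoundedFormula Empty n :=
  memRel.boundedFormula₂ t₁ t₂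

/-- Extensionality: `∀y∀z(∀x(x∈y ↔ x∈z) → y=z)`. -/
def extAx : L.Sentence :=
  ∀' ∀' ((∀' (memF (&2) (&0) ⇔ memF (&2) (&1))) ⟹ ((&0) =' (&1)))

/-- Basic set theory: the theory whose only axiom is extensionality. -/
def BST : L.Theory := {extAx}

/-- The UC-instance `∃y∀x(x∈y ↔ φ(x))` determined by a formula `φ` with one free
variable `x` (so that `y` does not occur free in `φ`). -/
def UCinst (φ : L.BoundedFormula Empty 1) : L.Sentence :=
  ∃' ∀' (memF (&1) (&0) ⇔ φ.liftAt 1 0)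

/-- Prefix a formula in context `k + 1` with `k` existential quantifiers,
yielding a formula in context `1`. -/
def exsN : ∀ (k : ℕ), L.BoundedFormula Empty (k + 1) → L.BoundedFormula Empty 1
  | 0, φ => φ
  | k + 1, φ => exsN k (∃' φ)

/-- Finite conjunction of a list of formulas. -/
def conjL {m : ℕ} : List (L.BoundedFormula Empty m) → L.BoundedFormula Empty m
  | [] => ⊤
  | φ :: l => φ ⊓ conjL l

/-- Finite disjunction of a list of formulas. -/
def disjL {m : ℕ} : List (L.BoundedFormula Empty m) → L.BoundedFormula Empty m
  | [] => ⊥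
  | φ :: l => φ ⊔ disjL l

/-- `card_n(y)`: `y` has exactly `n` elements.  For `n = 0` it is `∀x ¬x∈y`; for `n ≥ 1`
it is `∃x₁…∃xₙ(⋀_{i<j} xᵢ≠xⱼ ∧ ⋀_i xᵢ∈y ∧ ∀x(x∈y → ⋁_i x=xᵢ))`.
The free variable `y` is `&0`; the witnesses `xᵢ` are `&(i+1)`. -/
def cardF : ℕ → L.BoundedFormula Empty 1
  | 0 => ∀' ∼(memF (&1) (&0))
  | m + 1 =>
    exsN (m + 1) <|
      conjL (((List.finRange (m + 1)) ×ˢ (List.finRange (m + 1))).filterMap fun p =>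
          if p.1 < p.2 then some (∼((&p.1.succ) =' (&p.2.succ))) else none) ⊓
      conjL ((List.finRange (m + 1)).map fun i => memF (&i.succ) (&(0 : Fin (m + 2)))) ⊓
      (∀' (memF (&(Fin.last (m + 2))) (&(0 : Fin (m + 3))) ⟹
        disjL ((List.finRange (m + 1)).map fun i =>
          (&(Fin.last (m + 2))) =' (&(i.succ.castSucc : Fin (m + 3))))))

/-- `∀y(∀x(x∈y ↔ φ(x)) → y∈y)`: the set defined by `φ` is a member of itself. -/
def selfMemOf (φ : L.BoundedFormula Empty 1) : L.Sentence :=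
  ∀' ((∀' (memF (&1) (&0) ⇔ φ.liftAt 1 0)) ⟹ memF (&0) (&0))

lemma exists_injective_fin_range_eq_iff {α : Type*} {s : Set α} {k : ℕ} :
    (∃ x : Fin k → α, Function.Injective x ∧ Set.range x = s) ↔ s.encard = k := by
  constructor
  · rintro ⟨x, hx, rfl⟩
    rw [← Set.image_univ, hx.encard_image, Set.encard_univ, ENat.card_eq_coe_fintype_card,
      Fintype.card_fin]
  · intro hs
    have : Finite s := (Set.finite_of_encard_eq_coe hs).to_subtype
    have hcard : Nat.card s = k := by
      rw [Nat.card_coe_set_eq, Set.ncard_def, hs, ENat.toNat_natCast]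
    let e := Finite.equivFinOfCardEq hcard
    refine ⟨Subtype.val ∘ e.symm, Subtype.val_injective.comp e.symm.injective, ?_⟩
    rw [e.symm.surjective.range_comp, Subtype.range_coe]

lemma encard_compl_coe_finset {α : Type*} [Fintype α] [DecidableEq α] (s : Finset α) :
    (↑s : Set α)ᶜ.encard = (Fintype.card α - s.card : ℕ) := by
  rw [← Finset.coe_compl, Set.encard_coe_eq_coe_finsetCard, Finset.card_compl]

lemma Fin.last_ne_zero_of_pos {n : ℕ} (hn : 0 < n) : Fin.last n ≠ 0 := Fin.ext_iff.not.2 hn.ne'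

section Semantics

variable {M : Type*} [L.Structure M]

def memM (a b : M) : Prop := Structure.RelMap (L := L) memRel ![a, b]

@[simp] lemma realize_memF {k : ℕ} (t₁ t₂ : L.Term (Empty ⊕ Fin k)) (v : Empty → M)
    (xs : Fin k → M) :
    (memF t₁ t₂).Realize v xs ↔
      memM (t₁.realize (Sum.elim v xs)) (t₂.realize (Sum.elim v xs)) := by
  rw [memF, BoundedFormula.realize_rel₂]
  rfl

@[simp] lemma realize_conjL {k : ℕ} (l : List (L.BoundedFormula Empty k)) (v : Empty → M)
    (xs : Fin k → M) : (conjL l).Realize v xs ↔ ∀ φ ∈ l, φ.Realize v xs := by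
  induction l with
  | nil => simp [conjL]
  | cons φ l ih => simp [conjL, ih]

@[simp] lemma realize_disjL {k : ℕ} (l : List (L.BoundedFormula Empty k)) (v : Empty → M)
    (xs : Fin k → M) : (disjL l).Realize v xs ↔ ∃ φ ∈ l, φ.Realize v xs := by
  induction l with
  | nil => simp [disjL]
  | cons φ l ih => simp [disjL, ih]

lemma realize_exsN (k : ℕ) (φ : L.BoundedFormula Empty (k + 1)) (v : Empty → M) (y : M) :
    (exsN k φ).Realize v ![y] ↔ ∃ x : Fin k → M, φ.Realize v (Fin.cons y x) := by
  induction k with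
  | zero => simp [exsN, Fin.exists_fin_zero_pi]; rfl
  | succ k ih =>
    simp only [exsN, ih, BoundedFormula.realize_ex, ← Fin.cons_snoc_eq_snoc_cons]
    exact ⟨fun ⟨x, a, h⟩ => ⟨_, h⟩,
      fun ⟨x, h⟩ => ⟨Fin.init x, x (Fin.last k), by rwa [Fin.snoc_init_self]⟩⟩

lemma realize_cardF_succ (m : ℕ) (v : Empty → M) (y : M) :
    (cardF (m + 1)).Realize v ![y] ↔
      ∃ x : Fin (m + 1) → M, Function.Injective x ∧ Set.range x = {a | memM a y} := by
  -- keep the witness indices `i.succ.castSucc` of `cardF` in a form `Fin.snoc_castSucc` applies to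
  simp [cardF, realize_exsN, -Fin.castSucc_succ, Fin.snoc_castSucc,
    forall_comm (α := L.BoundedFormula Empty (m + 2)), Function.injective_iff_pairwise_ne,
    pairwise_iff_lt, Function.onFun, Set.Subset.antisymm_iff, Set.subset_def, and_assoc, @eq_comm M]

lemma realize_cardF (n : ℕ) (v : Empty → M) (y : M) :
    (cardF n).Realize v ![y] ↔ {a | memM a y}.encard = n := by
  cases n with
  | zero => simp [cardF, Set.eq_empty_iff_forall_notMem]
  | succ m => rw [realize_cardF_succ, exists_injective_fin_range_eq_iff]

lemma realize_extAx :
    M ⊨ extAx ↔ ∀ a b : M, (∀ c, memM c a ↔ memM c b) → a = b := by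
  simp [extAx, Sentence.Realize, Formula.Realize, Fin.snoc]

lemma realize_liftAt_one_zero_snoc_snoc (φ : L.BoundedFormula Empty 1) (y x : M) :
    (φ.liftAt 1 0).Realize default (Fin.snoc (Fin.snoc default y) x) ↔ φ.Realize default ![x] := by
  rw [BoundedFormula.realize_liftAt_one (by omega)]
  congr!
  ext i
  fin_cases i
  simp [Fin.snoc]

lemma realize_UCinst (φ : L.BoundedFormula Empty 1) :
    M ⊨ UCinst φ ↔ ∃ Y : M, ∀ x, memM x Y ↔ φ.Realize default ![x] := by
  simp [UCinst, Sentence.Realize, Formula.Realize, realize_liftAt_one_zero_snoc_snoc, Fin.snoc]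

lemma realize_selfMemOf (φ : L.BoundedFormula Empty 1) :
    M ⊨ selfMemOf φ ↔ ∀ Y : M, (∀ x, memM x Y ↔ φ.Realize default ![x]) → memM Y Y := by
  simp [selfMemOf, Sentence.Realize, Formula.Realize, realize_liftAt_one_zero_snoc_snoc, Fin.snoc]

lemma model_BST_union_pair_iff (φ ψ : L.Sentence) :
    M ⊨ BST ∪ {φ, ψ} ↔ M ⊨ extAx ∧ M ⊨ φ ∧ M ⊨ ψ := by
  simp only [BST, Theory.model_iff, Set.mem_union, Set.mem_insert_iff, Set.mem_singleton_iff,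
    or_imp, forall_and, forall_eq]

lemma realize_UCinst_cardF {n : ℕ} {Y : M} (hY : ∀ x, memM x Y ↔ {a | memM a x}.encard = n) :
    M ⊨ UCinst (cardF n) :=
  (realize_UCinst _).2 ⟨Y, fun x => by rw [hY, realize_cardF]⟩

lemma realize_selfMemOf_iff_of_ext (hext : ∀ a b : M, (∀ c, memM c a ↔ memM c b) → a = b)
    {φ : L.BoundedFormula Empty 1} {Y : M} (hY : ∀ x, memM x Y ↔ φ.Realize default ![x]) :
    M ⊨ selfMemOf φ ↔ memM Y Y := by
  rw [realize_selfMemOf]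
  exact ⟨fun h => h Y hY, fun hYY Z hZ => hext Z Y (fun c => (hZ c).trans (hY c).symm) ▸ hYY⟩

lemma realize_selfMemOf_cardF_iff {n : ℕ} {Y : M}
    (hext : ∀ a b : M, (∀ c, memM c a ↔ memM c b) → a = b)
    (hY : ∀ x, memM x Y ↔ {a | memM a x}.encard = n) :
    M ⊨ selfMemOf (cardF n) ↔ memM Y Y :=
  realize_selfMemOf_iff_of_ext hext fun x => (hY x).trans (realize_cardF n default x).symm

end Semantics

lemma isSatisfiable_selfMemOf_cardF {M : Type} [Nonempty M] [L.Structure M] {n : ℕ} {Y : M}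
    (hext : ∀ a b : M, (∀ c, memM c a ↔ memM c b) → a = b)
    (hY : ∀ x, memM x Y ↔ {a | memM a x}.encard = n) (hYY : memM Y Y) :
    (BST ∪ {UCinst (cardF n), selfMemOf (cardF n)}).IsSatisfiable :=
  have : M ⊨ BST ∪ {UCinst (cardF n), selfMemOf (cardF n)} :=
    (model_BST_union_pair_iff _ _).2 ⟨realize_extAx.2 hext, realize_UCinst_cardF hY,
      (realize_selfMemOf_cardF_iff hext hY).2 hYY⟩
  Theory.Model.isSatisfiable M

lemma isSatisfiable_not_selfMemOf_cardF {M : Type} [Nonempty M] [L.Structure M] {n : ℕ} {Y : M}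
    (hext : ∀ a b : M, (∀ c, memM c a ↔ memM c b) → a = b)
    (hY : ∀ x, memM x Y ↔ {a | memM a x}.encard = n) (hYY : ¬memM Y Y) :
    (BST ∪ {UCinst (cardF n), ∼(selfMemOf (cardF n))}).IsSatisfiable :=
  have : M ⊨ BST ∪ {UCinst (cardF n), ∼(selfMemOf (cardF n))} :=
    (model_BST_union_pair_iff _ _).2 ⟨realize_extAx.2 hext, realize_UCinst_cardF hY,
      (Sentence.realize_not M).2 ((realize_selfMemOf_cardF_iff hext hY).not.2 hYY)⟩
  Theory.Model.isSatisfiable M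

abbrev memStructure {M : Type*} (r : M → M → Prop) : L.Structure M where
  funMap f := f.elim
  RelMap {k} R := match k, R with
    | 2, _ => fun v => r (v 0) (v 1)

def selfMemRel (n : ℕ) (x y : Fin (n + 1)) : Prop := y ≠ 0 ∧ x ≠ y + 1

namespace selfMemRel

variable {n : ℕ}

lemma ext (hn : 0 < n) (a b : Fin (n + 1))
    (h : ∀ c, selfMemRel n c a ↔ selfMemRel n c b) : a = b := by
  have self_mem : ∀ y : Fin (n + 1), y ≠ 0 → selfMemRel n y y := fun y hy =>
    ⟨hy, by simpa using hn.ne'⟩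
  by_cases ha : a = 0 <;> by_cases hb : b = 0
  · rw [ha, hb]
  · exact absurd ha ((h b).2 (self_mem b hb)).1
  · exact absurd hb ((h a).1 (self_mem a ha)).1
  · exact add_right_cancel (not_not.1 fun hne => ((h (a + 1)).2 ⟨hb, hne⟩).2 rfl)

lemma encard_setOf (y : Fin (n + 1)) :
    {a | selfMemRel n a y}.encard = if y = 0 then 0 else n := by
  split_ifs with hy
  · simp [selfMemRel, hy]
  · have : {a | selfMemRel n a y} = (↑({y + 1} : Finset _))ᶜ := by ext; simp [selfMemRel, hy]
    rw [this, encard_compl_coe_finset]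
    simp

lemma mem_last_iff (hn : 0 < n) (x : Fin (n + 1)) :
    selfMemRel n x (Fin.last n) ↔ {a | selfMemRel n a x}.encard = n := by
  rw [encard_setOf]
  split_ifs with hx <;>
    simp [selfMemRel, Fin.last_ne_zero_of_pos hn, hx, eq_comm (a := (0 : ℕ∞)), hn.ne']

lemma last_mem_last (hn : 0 < n) : selfMemRel n (Fin.last n) (Fin.last n) :=
  ⟨Fin.last_ne_zero_of_pos hn, by simpa using Fin.last_ne_zero_of_pos hn⟩

end selfMemRel

def nonSelfMemRel (n : ℕ) (x y : Fin (n + 2)) : Prop := x ≠ 0 ∧ x ≠ y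

namespace nonSelfMemRel

variable {n : ℕ}

lemma ext (a b : Fin (n + 2)) (h : ∀ c, nonSelfMemRel n c a ↔ nonSelfMemRel n c b) : a = b := by
  by_contra hab
  have ha : a = 0 := by_contra fun ha => ((h a).2 ⟨ha, hab⟩).2 rfl
  have hb : b = 0 := by_contra fun hb => ((h b).1 ⟨hb, Ne.symm hab⟩).2 rfl
  exact hab (ha.trans hb.symm)

lemma encard_setOf (y : Fin (n + 2)) :
    {a | nonSelfMemRel n a y}.encard = if y = 0 then n + 1 else n := by
  have : {a | nonSelfMemRel n a y} = (↑({0, y} : Finset _))ᶜ := by ext; simp [nonSelfMemRel]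
  rw [this, encard_compl_coe_finset]
  split_ifs with hy
  · simp [hy]
  · simp [Finset.card_pair (Ne.symm hy)]

lemma mem_zero_iff (x : Fin (n + 2)) :
    nonSelfMemRel n x 0 ↔ {a | nonSelfMemRel n a x}.encard = n := by
  rw [encard_setOf]
  split_ifs with hx <;> simp [nonSelfMemRel, hx]

end nonSelfMemRel

/-- For every `n > 0`, the self-membership of the set of all sets of size `n` is
independent in `BST`: with `α_n := ∃y∀x(x∈y ↔ card_n(x))` and
`σ_n := ∀y(∀x(x∈y ↔ card_n(x)) → y∈y)`, both `BST ∪ {α_n, σ_n}` and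
`BST ∪ {α_n, ¬σ_n}` are satisfiable. -/
theorem size_n_selfMem_independent (n : ℕ) (hn : 0 < n) :
    (BST ∪ {UCinst (cardF n), selfMemOf (cardF n)}).IsSatisfiable ∧
    (BST ∪ {UCinst (cardF n), ∼(selfMemOf (cardF n))}).IsSatisfiable := by
  constructor
  · let _ : L.Structure (Fin (n + 1)) := memStructure (selfMemRel n)
    exact isSatisfiable_selfMemOf_cardF (selfMemRel.ext hn) (selfMemRel.mem_last_iff hn)
      (selfMemRel.last_mem_last hn)
  · let _ : L.Structure (Fin (n + 2)) := memStructure (nonSelfMemRel n)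
    exact isSatisfiable_not_selfMemOf_cardF (M := Fin (n + 2)) nonSelfMemRel.ext
      nonSelfMemRel.mem_zero_iff fun h => h.1 rfl

end SetParadox
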